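/- arXiv:1310.1346 — 4 statements merged into one kernel-verified Lean document; each statement's English description precedes it below -/
import Mathlib

section
/- For every odd integer p ≥ 1 and every integer i with 0 ≤ i < p, the lens-space correction term satisfies d(p,2,i) = (2i−p−1)²/(8p) − (1+(−1)^i)/4. -/
/-- The Heegaard Floer correction terms `d(L(p,q), i)` of lens spaces, defined by the
recursion `d(p,q,i) = -1/4 + (2i+1-p-q)^2/(4pq) - d(q, p mod q, i mod q)` with
`d(p,0,i) = 0` (in particular the base case `d(1,0,0) = 0`). -/
def dL (p q i : ℤ) : ℚ :=
  if hq : 0 < q then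
    -1/4 + (2*(i:ℚ) + 1 - p - q)^2 / (4*p*q) - dL q (p % q) (i % q)
  else 0
termination_by q.toNat
decreasing_by
  have h1 : 0 ≤ p % q := Int.emod_nonneg p (by omega)
  have h2 : p % q < q := Int.emod_lt_of_pos p hq
  omega

theorem d_p_2 (p i : ℤ) (hp : 1 ≤ p) (hodd : Odd p) (hi0 : 0 ≤ i) (hi : i < p) :
    dL p 2 i = (2*(i:ℚ) - p - 1)^2 / (8*p) - (1 + (-1:ℚ)^i) / 4 := by
  have hp2 : p % 2 = 1 := Int.odd_iff.mp hodd
  have hd100 : dL 1 0 0 = 0 := by rw [dL]; norm_num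
  have hd210 : dL 2 1 0 = 1/4 := by
    rw [dL]; norm_num [hd100]
  have hd211 : dL 2 1 1 = -1/4 := by
    rw [dL]; norm_num [hd100]
  rw [dL]
  rw [dif_pos (by norm_num : (0:ℤ) < 2), hp2]
  have hp0 : (p:ℚ) ≠ 0 := by positivity
  rcases Int.emod_two_eq i with h | h
  · have hev : Even i := Int.even_iff.mpr h
    rw [h, hd210, hev.neg_one_zpow]
    push_cast
    field_simp
    ring
  · have hod : Odd i := Int.odd_iff.mpr h
    rw [h, hd211, hod.neg_one_zpow]
    push_cast
    field_simp
    ring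
end

section
/- Let q ≥ 12 be an integer with q ≡ 2 (mod 3), set p = 6q − 3 and a = q − 1. Then, for the pair (p,q) and ε = 1, δ^{1}_{a}(6) − δ^{1}_{a}(7) = −2. -/
/-- The characteristic function `χ_[0,q)`. -/
def chiIco (q x : ℤ) : ℚ := if 0 ≤ x ∧ x < q then 1 else 0

/-- `φ_a(i)`: the representative in `{0, …, p-1}` of
`a(i - (p+1)/2) + (θ̄(q)p + q - 1)/2` modulo `p` (for odd `p > 0`);
here `θ̄(q) = 1 - q % 2`. -/
def phiA (p q a i : ℤ) : ℤ :=
  (a * (i - (p + 1) / 2) + ((1 - q % 2) * p + q - 1) / 2) % p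

/-- `δ^ε_a(i) = (2i-p-1)²/(8p) - θ̄(i)/2 - ε·d(p,q,φ_a(i)) + 2ε·χ_[0,q)(φ_a(i))`,
which equals `d(L(p,2),i) - ε·d(𝕋(p/q), φ_a(i))`. -/
def deltaE (p q ε a i : ℤ) : ℚ :=
  (2*(i:ℚ) - p - 1)^2 / (8*p) - ((1 - i % 2 : ℤ) : ℚ) / 2
    - ε * dL p q (phiA p q a i) + 2 * ε * chiIco q (phiA p q a i)

lemma dL_eq (p q i : ℤ) (hq : 0 < q) :
    dL p q i = -1/4 + (2*(i:ℚ) + 1 - p - q)^2 / (4*p*q) - dL q (p % q) (i % q) := by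
  rw [dL, dif_pos hq]

lemma dL_base (p i : ℤ) : dL p 0 i = 0 := by
  rw [dL, dif_neg (by omega)]

lemma dL10 (i : ℤ) : dL 1 0 i = 0 := dL_base 1 i

lemma dL210 : dL 2 1 0 = 1/4 := by
  rw [dL_eq 2 1 0 one_pos]
  norm_num [dL10]

lemma dL211 : dL 2 1 1 = -1/4 := by
  rw [dL_eq 2 1 1 one_pos]
  norm_num [dL10]

lemma dL322 : dL 3 2 2 = -1/2 := by
  rw [dL_eq 3 2 2 (by norm_num)]
  norm_num [dL210]

lemma dL321 : dL 3 2 1 = 1/6 := by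
  rw [dL_eq 3 2 1 (by norm_num)]
  norm_num [dL211]

/-- For `q ≡ 2 (mod 3)`, `p = 6q - 3`, `a = q - 1` and `ε = 1`:
`δ¹_a(6) - δ¹_a(7) = -2`. -/
theorem delta_diff_eps_pos (q p a : ℤ) (hq : 12 ≤ q) (hq3 : q % 3 = 2)
    (hp : p = 6 * q - 3) (ha : a = q - 1) :
    deltaE p q 1 a 6 - deltaE p q 1 a 7 = -2 := by
  subst hp ha
  have hphi6 : phiA (6*q-3) q (q-1) 6 = 6*q-6 := by
    unfold phiA
    have e1 : (6*q-3+1)/2 = 3*q-1 := by omega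
    rcases Int.even_or_odd q with ⟨m, hm⟩ | ⟨m, hm⟩
    · have e2 : ((1 - q % 2) * (6*q-3) + q - 1)/2 = 7*m-2 := by
        have h0 : q % 2 = 0 := by omega
        rw [h0]; omega
      rw [e1, e2]
      have h : (q-1) * (6 - (3*q-1)) + (7*m-2) = (6*q-6) + (6*q-3)*(1-m) := by
        subst hm; ring
      rw [h, Int.add_mul_emod_self_left, Int.emod_eq_of_lt (by omega) (by omega)]
    · have e2 : ((1 - q % 2) * (6*q-3) + q - 1)/2 = m := by
        have h0 : q % 2 = 1 := by omega
        rw [h0]; omega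
      rw [e1, e2]
      have h : (q-1) * (6 - (3*q-1)) + m = (6*q-6) + (6*q-3)*(-m) := by
        subst hm; ring
      rw [h, Int.add_mul_emod_self_left, Int.emod_eq_of_lt (by omega) (by omega)]
  have hphi7 : phiA (6*q-3) q (q-1) 7 = q-4 := by
    unfold phiA
    have e1 : (6*q-3+1)/2 = 3*q-1 := by omega
    rcases Int.even_or_odd q with ⟨m, hm⟩ | ⟨m, hm⟩
    · have e2 : ((1 - q % 2) * (6*q-3) + q - 1)/2 = 7*m-2 := by
        have h0 : q % 2 = 0 := by omega
        rw [h0]; omega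
      rw [e1, e2]
      have h : (q-1) * (7 - (3*q-1)) + (7*m-2) = (q-4) + (6*q-3)*(2-m) := by
        subst hm; ring
      rw [h, Int.add_mul_emod_self_left, Int.emod_eq_of_lt (by omega) (by omega)]
    · have e2 : ((1 - q % 2) * (6*q-3) + q - 1)/2 = m := by
        have h0 : q % 2 = 1 := by omega
        rw [h0]; omega
      rw [e1, e2]
      have h : (q-1) * (7 - (3*q-1)) + m = (q-4) + (6*q-3)*(1-m) := by
        subst hm; ring
      rw [h, Int.add_mul_emod_self_left, Int.emod_eq_of_lt (by omega) (by omega)]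
  -- mod facts
  have hm1 : (6*q-3) % q = q-3 := by
    rw [show 6*q-3 = (q-3) + q*5 by ring, Int.add_mul_emod_self_left,
      Int.emod_eq_of_lt (by omega) (by omega)]
  have hm2 : (6*q-6) % q = q-6 := by
    rw [show 6*q-6 = (q-6) + q*5 by ring, Int.add_mul_emod_self_left,
      Int.emod_eq_of_lt (by omega) (by omega)]
  have hm3 : (q-4) % q = q-4 := Int.emod_eq_of_lt (by omega) (by omega)
  have hm4 : q % (q-3) = 3 := by
    have h1 : q % (q-3) = 3 % (q-3) :=
      Int.emod_eq_emod_iff_emod_sub_eq_zero.mpr (by rw [Int.emod_self])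
    rw [h1, Int.emod_eq_of_lt (by omega) (by omega)]
  have hm5 : (q-6) % (q-3) = q-6 := Int.emod_eq_of_lt (by omega) (by omega)
  have hm6 : (q-4) % (q-3) = q-4 := Int.emod_eq_of_lt (by omega) (by omega)
  have hm7 : (q-3) % 3 = 2 := by omega
  have hm8 : (q-6) % 3 = 2 := by omega
  have hm9 : (q-4) % 3 = 1 := by omega
  have hc1 : chiIco q (6*q-6) = 0 := by
    unfold chiIco; rw [if_neg (by omega)]
  have hc2 : chiIco q (q-4) = 1 := by
    unfold chiIco; rw [if_pos (by omega)]
  unfold deltaE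
  rw [hphi6, hphi7, hc1, hc2]
  rw [dL_eq (6*q-3) q (6*q-6) (by omega), hm1, hm2,
    dL_eq q (q-3) (q-6) (by omega), hm4, hm5,
    dL_eq (q-3) 3 (q-6) (by norm_num), hm7, hm8, dL322]
  rw [dL_eq (6*q-3) q (q-4) (by omega), hm1, hm3,
    dL_eq q (q-3) (q-4) (by omega), hm4, hm6,
    dL_eq (q-3) 3 (q-4) (by norm_num), hm7, hm9, dL321]
  have hq0 : (q:ℚ) ≠ 0 := by
    exact_mod_cast (by omega : q ≠ 0)
  have hql : (3:ℚ) < q := by exact_mod_cast (by omega : (3:ℤ) < q)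
  have hq3' : (q:ℚ) - 3 ≠ 0 := ne_of_gt (by linarith)
  have hp0 : 6*(q:ℚ) - 3 ≠ 0 := ne_of_gt (by linarith)
  push_cast
  field_simp
  ring
end

section
/- Let q ≥ 12 be an integer with q ≡ 1 (mod 3), set p = 6q + 3 and a = q + 1. Then, for the pair (p,q) and ε = −1, δ^{−1}_{a}(6) − δ^{−1}_{a}(7) = −2. -/
/-- For `q ≡ 1 (mod 3)`, `p = 6q + 3`, `a = q + 1` and `ε = -1`:
`δ⁻¹_a(6) - δ⁻¹_a(7) = -2`. -/
theorem delta_diff_eps_neg (q p a : ℤ) (hq : 12 ≤ q) (hq3 : q % 3 = 1)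
    (hp : p = 6 * q + 3) (ha : a = q + 1) :
    deltaE p q (-1) a 6 - deltaE p q (-1) a 7 = -2 := by
  subst hp ha
  have h100 : dL 1 0 0 = 0 := by rw [dL]; norm_num
  have h312 : dL 3 1 2 = -1/6 := by
    rw [dL, dif_pos (by norm_num : (0:ℤ) < 1)]
    norm_num [h100]
  have h310 : dL 3 1 0 = 1/2 := by
    rw [dL, dif_pos (by norm_num : (0:ℤ) < 1)]
    norm_num [h100]
  -- φ values
  have hphi6 : phiA (6*q+3) q (q+1) 6 = 2 := by
    unfold phiA
    have h1 : (6*q+3 + 1) / 2 = 3*q+2 := by omega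
    rw [h1]
    rcases Int.even_or_odd q with ⟨k, hk⟩ | ⟨k, hk⟩
    · have h2 : ((1 - q % 2) * (6*q+3) + q - 1) / 2 = 7*k+1 := by
        rw [show q % 2 = 0 from by omega]; omega
      rw [h2, show (q+1) * (6 - (3*q+2)) + (7*k+1) = 2 + (6*q+3) * (1-k) by
        subst hk; ring]
      rw [Int.add_mul_emod_self_left]
      exact Int.emod_eq_of_lt (by norm_num) (by omega)
    · have h2 : ((1 - q % 2) * (6*q+3) + q - 1) / 2 = k := by
        rw [show q % 2 = 1 from by omega]; omega
      rw [h2, show (q+1) * (6 - (3*q+2)) + k = 2 + (6*q+3) * (-k) by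
        subst hk; ring]
      rw [Int.add_mul_emod_self_left]
      exact Int.emod_eq_of_lt (by norm_num) (by omega)
  have hphi7 : phiA (6*q+3) q (q+1) 7 = q+3 := by
    unfold phiA
    have h1 : (6*q+3 + 1) / 2 = 3*q+2 := by omega
    rw [h1]
    rcases Int.even_or_odd q with ⟨k, hk⟩ | ⟨k, hk⟩
    · have h2 : ((1 - q % 2) * (6*q+3) + q - 1) / 2 = 7*k+1 := by
        rw [show q % 2 = 0 from by omega]; omega
      rw [h2, show (q+1) * (7 - (3*q+2)) + (7*k+1) = (q+3) + (6*q+3) * (1-k) by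
        subst hk; ring]
      rw [Int.add_mul_emod_self_left]
      exact Int.emod_eq_of_lt (by omega) (by omega)
    · have h2 : ((1 - q % 2) * (6*q+3) + q - 1) / 2 = k := by
        rw [show q % 2 = 1 from by omega]; omega
      rw [h2, show (q+1) * (7 - (3*q+2)) + k = (q+3) + (6*q+3) * (-k) by
        subst hk; ring]
      rw [Int.add_mul_emod_self_left]
      exact Int.emod_eq_of_lt (by omega) (by omega)
  -- mod facts
  have hpq : (6*q+3) % q = 3 := by
    rw [show 6*q+3 = 3 + q*6 by ring, Int.add_mul_emod_self_left]
    exact Int.emod_eq_of_lt (by norm_num) (by omega)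
  have hq3q : (q+3) % q = 3 := by
    rw [show q+3 = 3 + q*1 by ring, Int.add_mul_emod_self_left]
    exact Int.emod_eq_of_lt (by norm_num) (by omega)
  have h2q : (2:ℤ) % q = 2 := Int.emod_eq_of_lt (by norm_num) (by omega)
  -- dL q 3 values
  have hA : dL q 3 2 = -1/4 + (2 - (q:ℚ))^2 / (4*q*3) - (-1/6) := by
    rw [dL, dif_pos (by norm_num : (0:ℤ) < 3), hq3]
    norm_num [h312]
    ring
  have hB : dL q 3 3 = -1/4 + (4 - (q:ℚ))^2 / (4*q*3) - (1/2) := by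
    rw [dL, dif_pos (by norm_num : (0:ℤ) < 3), hq3]
    norm_num [h310]
    ring
  -- dL p q values
  have hC : dL (6*q+3) q 2 = -1/4 + (5 - ((6*q+3:ℤ):ℚ) - q)^2 / (4*(6*q+3)*q) - dL q 3 2 := by
    rw [dL, dif_pos (by omega : (0:ℤ) < q), hpq, h2q]
    push_cast
    ring_nf
  have hD : dL (6*q+3) q (q+3) = -1/4 + (2*((q:ℚ)+3) + 1 - ((6*q+3:ℤ):ℚ) - q)^2 / (4*(6*q+3)*q) - dL q 3 3 := by
    rw [dL, dif_pos (by omega : (0:ℤ) < q), hpq, hq3q]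
    push_cast
    try ring_nf
  have hchi2 : chiIco q 2 = 1 := by simp [chiIco] <;> omega
  have hchiq3 : chiIco q (q+3) = 0 := by simp [chiIco] <;> omega
  simp only [deltaE, hphi6, hphi7, hC, hD, hA, hB, hchi2, hchiq3]
  have hqQ : (q:ℚ) ≠ 0 := by
    have : (0:ℚ) < q := by exact_mod_cast (by omega : (0:ℤ) < q)
    linarith
  have hpQ : ((6*q+3 : ℤ):ℚ) ≠ 0 := by
    have : (0:ℚ) < ((6*q+3:ℤ):ℚ) := by exact_mod_cast (by omega : (0:ℤ) < 6*q+3)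
    linarith
  push_cast at hpQ ⊢
  field_simp
  ring
end

section
/- Let r ∈ {3,5}, ζ ∈ {1,−1}, let q > 2r with gcd(q,r) = 1, set p = 6q + ζr. Let a be an integer with 0 < a < p/2, let m ∈ {0,1,2,3} satisfy 0 ≤ a − mq + (θ̄(q)ζr + q − 1)/2 < q, and assume (6a − mp)² < 48rp. Let k be an integer with 0 ≤ k < (p−13r+6)/(48√(3rp)) − 1/6, and set i_k = (θ̄(q)p+q−1)/2 + 6ak − kmp and j_k = (θ̄(q)ζr+q−1)/2 + 6ak − kmp. Then 0 ≤ i_k < i_k + a < p + q, and 0 ≤ j_k < q and 0 ≤ j_k + a − mq < q. -/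
/-!
Write `d = 6a - mp`, so that `i_k` and `j_k` are their values at `k = 0` shifted by `dk`.
The hypothesis `d² < 48rp` gives `|d| < 4√(3rp)`, and then the bound on `k` gives the linear
estimate `|d| (12k + 2) < p - 13r + 6 ≈ 6q - 12r`, i.e. `|dk| + |d|/6` is less than about
`q/2 - r`.
This leaves room for everything: `6(a - mq) = d + mζr` with `|mζr| ≤ 3r`, so adding `a - mq`
moves `j_k` by less than `|d|/6 + r/2`, and the remaining inequalities are linear arithmetic
after splitting on the parity of `q`.
-/

lemma abs_lt_four_mul_sqrt {x c : ℝ} (h : x ^ 2 < 16 * c) : |x| < 4 * √c := by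
  have hsqrt : √(16 * c) = 4 * √c := by
    rw [Real.sqrt_mul (by norm_num), show (16 : ℝ) = 4 ^ 2 by norm_num,
      Real.sqrt_sq (by norm_num)]
  rw [← hsqrt]
  exact (Real.lt_sqrt (abs_nonneg x)).2 (by rwa [sq_abs])

lemma abs_mul_twelve_mul_add_two_lt {d k N : ℤ} {c : ℝ} (hd : (d : ℝ) ^ 2 < 16 * c)
    (hk0 : 0 ≤ k) (hk : (k : ℝ) < N / (48 * √c) - 1 / 6) :
    |d| * (12 * k + 2) < N := by
  have hdc : |(d : ℝ)| < 4 * √c := abs_lt_four_mul_sqrt hd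
  have hc : 0 < 4 * √c := (abs_nonneg _).trans_lt hdc
  have hk' : (k : ℝ) + 1 / 6 < N / 12 / (4 * √c) := by
    rw [div_div, show (12 : ℝ) * (4 * √c) = 48 * √c by ring]
    linarith
  have hkR : (0 : ℝ) ≤ k + 1 / 6 := by positivity
  have key : |(d : ℝ)| * (k + 1 / 6) < N / 12 :=
    calc |(d : ℝ)| * (k + 1 / 6) ≤ 4 * √c * (k + 1 / 6) := by gcongr
      _ < N / 12 := (lt_div_iff₀' hc).1 hk'
  have : ((|d| * (12 * k + 2) : ℤ) : ℝ) < N := by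
    push_cast
    linarith
  exact_mod_cast this

lemma i_label_in_range {r s q p a K i : ℤ} (hs : |s| ≤ r) (hp : p = 6 * q + s)
    (ha0 : 0 < a) (ha1 : 2 * a < p) (hK : 12 * |K| < p - 13 * r + 6)
    (hi : i = ((1 - q % 2) * p + q - 1) / 2 + K) :
    0 ≤ i ∧ i < i + a ∧ i + a < p + q := by
  have := le_abs_self K; have := neg_abs_le K
  have := le_abs_self s; have := neg_abs_le s
  rcases Int.emod_two_eq q with h | h <;>
    simp only [hi, h, sub_zero, sub_self, one_mul, zero_mul] <;> omega

/- For even `q` and `s = -r` the rounding in `(q - r - 1) / 2` costs up to `1`, which the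
margin `r / 6` only covers when `r ≥ 3` (the lemma fails for `r = 2`). -/
lemma j_label_in_range {r s q p a m K j : ℤ} (hr : 3 ≤ r) (hs : |s| ≤ r) (hp : p = 6 * q + s)
    (hm : |m| ≤ 3) (hK : 12 * |K| + 2 * |6 * a - m * p| < p - 13 * r + 6)
    (hj : j = ((1 - q % 2) * s + q - 1) / 2 + K) :
    0 ≤ j ∧ j < q ∧ 0 ≤ j + a - m * q ∧ j + a - m * q < q := by
  have hms : |m * s| ≤ 3 * r := by
    rw [abs_mul]
    exact mul_le_mul hm hs (abs_nonneg s) (by norm_num)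
  have hd : 6 * a - m * p = 6 * (a - m * q) - m * s := by rw [hp]; ring
  rw [hd] at hK
  have := le_abs_self K; have := neg_abs_le K
  have := le_abs_self s; have := neg_abs_le s
  have := le_abs_self (m * s); have := neg_abs_le (m * s)
  have := le_abs_self (6 * (a - m * q) - m * s); have := neg_abs_le (6 * (a - m * q) - m * s)
  rcases Int.emod_two_eq q with h | h <;>
    simp only [hj, h, sub_zero, sub_self, one_mul, zero_mul] <;> omega

theorem ik_jk_in_range_general (r ζ q p a m k : ℤ)
    (hr : r = 3 ∨ r = 5) (hζ : ζ = 1 ∨ ζ = -1)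
    (hp : p = 6 * q + ζ * r)
    (ha0 : 0 < a) (ha1 : 2 * a < p)
    (hm : m = 0 ∨ m = 1 ∨ m = 2 ∨ m = 3)
    (hbound : (6 * a - m * p) ^ 2 < 48 * r * p)
    (hk0 : 0 ≤ k)
    (hk : (k : ℝ) < ((p : ℝ) - 13 * r + 6) / (48 * Real.sqrt (3 * r * p)) - 1/6)
    (ik jk : ℤ)
    (hik : ik = ((1 - q % 2) * p + q - 1) / 2 + 6 * a * k - k * m * p)
    (hjk : jk = ((1 - q % 2) * ζ * r + q - 1) / 2 + 6 * a * k - k * m * p) :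
    0 ≤ ik ∧ ik < ik + a ∧ ik + a < p + q ∧
    0 ≤ jk ∧ jk < q ∧ 0 ≤ jk + a - m * q ∧ jk + a - m * q < q := by
  set d := 6 * a - m * p with hd
  have hr3 : 3 ≤ r := by omega
  have hs : |ζ * r| ≤ r := by rcases hζ with rfl | rfl <;> simp [abs_of_pos (by omega : 0 < r)]
  have hm3 : |m| ≤ 3 := by rcases hm with rfl | rfl | rfl | rfl <;> norm_num
  have hd2 : d ^ 2 < 16 * (3 * r * p) := by linarith
  have hdk : |d| * (12 * k + 2) < p - 13 * r + 6 :=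
    abs_mul_twelve_mul_add_two_lt (c := 3 * r * p) (by exact_mod_cast hd2) hk0
      (by push_cast; exact hk)
  have hK : |d * k| = |d| * k := by rw [abs_mul, abs_of_nonneg hk0]
  obtain ⟨hi0, hia, hipq⟩ := i_label_in_range hs hp ha0 ha1 (K := d * k) (i := ik)
    (by rw [hK]; linarith [abs_nonneg d]) (by rw [hik, hd]; ring)
  exact ⟨hi0, hia, hipq, j_label_in_range hr3 hs hp hm3 (K := d * k) (j := jk)
    (by rw [hK]; linarith) (by rw [hjk, hd, mul_assoc]; ring)⟩

/-- The Spin^c labels `i_k`, `j_k` lie in the admissible ranges: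
`0 ≤ i_k < i_k + a < p + q`, `0 ≤ j_k < q` and `0 ≤ j_k + a - mq < q`. -/
theorem ik_jk_in_range (r ζ q p a m k : ℤ)
    (hr : r = 3 ∨ r = 5) (hζ : ζ = 1 ∨ ζ = -1)
    (hq : 2 * r < q) (hqr : Int.gcd q r = 1) (hp : p = 6 * q + ζ * r)
    (ha0 : 0 < a) (ha1 : 2 * a < p)
    (hm : m = 0 ∨ m = 1 ∨ m = 2 ∨ m = 3)
    (hm0 : 0 ≤ a - m * q + ((1 - q % 2) * ζ * r + q - 1) / 2)
    (hm1 : a - m * q + ((1 - q % 2) * ζ * r + q - 1) / 2 < q)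
    (hbound : (6 * a - m * p) ^ 2 < 48 * r * p)
    (hk0 : 0 ≤ k)
    (hk : (k : ℝ) < ((p : ℝ) - 13 * r + 6) / (48 * Real.sqrt (3 * r * p)) - 1/6)
    (ik jk : ℤ)
    (hik : ik = ((1 - q % 2) * p + q - 1) / 2 + 6 * a * k - k * m * p)
    (hjk : jk = ((1 - q % 2) * ζ * r + q - 1) / 2 + 6 * a * k - k * m * p) :
    0 ≤ ik ∧ ik < ik + a ∧ ik + a < p + q ∧
    0 ≤ jk ∧ jk < q ∧ 0 ≤ jk + a - m * q ∧ jk + a - m * q < q :=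
  ik_jk_in_range_general r ζ q p a m k hr hζ hp ha0 ha1 hm hbound hk0 hk ik jk hik hjk
end
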